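/- Let a > 0, Γ > 0, Δt > 0, and set α_s = e^{−Γ s}. Define the 2×2 matrix M₁ with entries M₁ = [[1 − aΔt²/2, α_{Δt/2}(Δt − aΔt³/4)], [−aΔt α_{Δt/2}, α_{Δt}(1 − aΔt²/2)]]. Then M₁ = I − Δt B + O(Δt²) where B = [[0, −1],[a, Γ]], and since the eigenvalues of B have strictly positive real parts, for Δt sufficiently small the spectral radius of M₁ is strictly less than 1; consequently M₁^m → 0 as m → ∞ and I − M₁ is invertible. -/

import Mathlib

open Filter Asymptotics Matrix Topology
open scoped ENNReal NNReal

private theorem expO2' (c : ℝ) : (fun x : ℝ => Real.exp (c*x) - 1 - c*x) =O[𝓝 0] fun x => x^2 := by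
  apply IsBigO.of_bound (c^2)
  have h : ∀ᶠ x : ℝ in 𝓝 0, |x| < 1/(|c|+1) := by
    have := eventually_abs_sub_lt (0:ℝ) (by positivity : (0:ℝ) < 1/(|c|+1))
    simpa using this
  filter_upwards [h] with x hx
  have hx' : |x| * (|c|+1) < 1 := by
    rw [lt_div_iff₀ (by positivity)] at hx; linarith
  have hcx : |c*x| ≤ 1 := by
    rw [abs_mul]
    nlinarith [abs_nonneg c, abs_nonneg x]
  have hb := Real.exp_bound hcx (n := 2) (by norm_num)
  simp [Finset.sum_range_succ] at hb
  have h2 : |Real.exp (c*x) - 1 - c*x| ≤ (|c| * |x|)^2 * (3/4) := by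
    rw [← abs_mul]
    convert hb using 2 <;> norm_num <;> ring
  calc |Real.exp (c*x) - 1 - c*x| ≤ (|c| * |x|)^2 * (3/4) := h2
    _ ≤ c^2 * ‖x^2‖ := by
        rw [mul_pow, sq_abs, sq_abs]
        have : c^2 * x^2 * (3/4) ≤ c^2 * x^2 := by nlinarith [sq_nonneg c, sq_nonneg x]
        simpa [abs_of_nonneg (sq_nonneg x)] using this

private theorem powO' (n : ℕ) : (fun x : ℝ => x^(n+1)) =O[𝓝 0] fun x => x^n := by
  apply IsBigO.of_bound 1
  have h : ∀ᶠ x : ℝ in 𝓝 0, |x| < 1 := by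
    simpa using eventually_abs_sub_lt (0:ℝ) one_pos
  filter_upwards [h] with x hx
  simp only [norm_pow, Real.norm_eq_abs, one_mul, pow_succ, abs_mul, abs_pow]
  nlinarith [abs_nonneg x, pow_nonneg (abs_nonneg x) n]

private theorem expO1' (c : ℝ) : (fun x : ℝ => Real.exp (c*x) - 1) =O[𝓝 0] fun x => x := by
  have h1 := (expO2' c).trans (by simpa using powO' 1)
  have h2 : (fun x : ℝ => c * x) =O[𝓝 0] fun x => x :=
    (isBigO_refl _ _).const_mul_left c
  simpa using h1.add h2

private theorem expO0' (c : ℝ) : (fun x : ℝ => Real.exp (c*x)) =O[𝓝 0] fun _ => (1:ℝ) := by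
  apply Filter.Tendsto.isBigO_one
  have : Continuous fun x : ℝ => Real.exp (c*x) := by continuity
  simpa using this.tendsto 0

private theorem rootBound' (t d : ℝ) (hd0 : 0 < d) (hd1 : d < 1) (ht0 : 0 < t) (ht : t < 1 + d)
    (z : ℂ) (hz : z^2 - t*z + d = 0) :
    ‖z‖ ≤ max (Real.sqrt d) (1 - (1 + d - t)/2) := by
  have hconj : (starRingEnd ℂ) z ^ 2 - t * (starRingEnd ℂ) z + d = 0 := by
    have := congrArg (starRingEnd ℂ) hz
    simpa [map_sub, map_add, _root_.map_mul, map_pow, Complex.conj_ofReal] using this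
  have hfac : (z - (starRingEnd ℂ) z) * (z + (starRingEnd ℂ) z - t) = 0 := by
    linear_combination hz - hconj
  rcases mul_eq_zero.mp hfac with h | h
  · have hzr : z = (z.re : ℂ) := (Complex.conj_eq_iff_re.mp (sub_eq_zero.mp h).symm).symm
    set x := z.re with hx
    have hre : x^2 - t*x + d = 0 := by
      have : ((x^2 - t*x + d : ℝ) : ℂ) = 0 := by push_cast; rw [← hzr]; exact hz
      exact_mod_cast this
    have hx0 : 0 < x := by nlinarith
    have hx1 : x < 1 := by nlinarith
    have hxb : x ≤ 1 - (1 + d - t)/2 := by nlinarith [(1-x)*(1+x-t)]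
    rw [hzr]
    simp only [Complex.norm_real, Real.norm_eq_abs, abs_of_pos hx0]
    exact le_max_of_le_right hxb
  · have hc : (starRingEnd ℂ) z = t - z := by linear_combination h
    have hsq : (Complex.normSq z : ℂ) = (d : ℂ) := by
      rw [← Complex.mul_conj, hc]; linear_combination -hz
    have hsq' : Complex.normSq z = d := by exact_mod_cast hsq
    have : ‖z‖ = Real.sqrt d := by
      rw [← hsq', Complex.norm_def]
    rw [this]; exact le_max_left _ _

private theorem specBound' (t d : ℝ) (hd0 : 0 < d) (hd1 : d < 1) (ht0 : 0 < t) (ht : t < 1 + d)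
    (M : Matrix (Fin 2) (Fin 2) ℝ) (htr : M 0 0 + M 1 1 = t)
    (hdet : M 0 0 * M 1 1 - M 0 1 * M 1 0 = d) :
    spectralRadius ℂ (M.map ((↑) : ℝ → ℂ)) < 1 := by
  set r : ℝ := max (Real.sqrt d) (1 - (1 + d - t)/2) with hr
  have hr1 : r < 1 := by
    refine max_lt ?_ (by linarith)
    rw [show (1:ℝ) = Real.sqrt 1 by simp]
    exact Real.sqrt_lt_sqrt (le_of_lt hd0) hd1
  have key : ∀ z ∈ spectrum ℂ (M.map ((↑) : ℝ → ℂ)), ‖z‖ ≤ r := by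
    intro z hz
    rw [spectrum.mem_iff] at hz
    have hdet0 : (algebraMap ℂ (Matrix (Fin 2) (Fin 2) ℂ) z - M.map ((↑) : ℝ → ℂ)).det = 0 := by
      by_contra hne
      exact hz ((Matrix.isUnit_iff_isUnit_det _).mpr (Ne.isUnit hne))
    rw [Matrix.det_fin_two] at hdet0
    simp only [Matrix.algebraMap_eq_diagonal, Pi.algebraMap_apply, Algebra.algebraMap_self,
      RingHom.id_apply, Matrix.sub_apply, Matrix.diagonal_apply, Matrix.map_apply,
      ite_true, ite_false, Fin.isValue, one_ne_zero, zero_ne_one, if_true, if_false] at hdet0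
    have htr' : ((M 0 0 : ℂ)) + (M 1 1 : ℂ) = (t : ℂ) := by exact_mod_cast congrArg ((↑) : ℝ → ℂ) htr
    have hdet' : (M 0 0 : ℂ) * (M 1 1 : ℂ) - (M 0 1 : ℂ) * (M 1 0 : ℂ) = (d : ℂ) := by
      exact_mod_cast congrArg ((↑) : ℝ → ℂ) hdet
    have hq : z^2 - (t:ℂ)*z + (d:ℂ) = 0 := by
      linear_combination hdet0 + z * htr' - hdet'
    exact rootBound' t d hd0 hd1 ht0 ht z hq
  have hrad : spectralRadius ℂ (M.map ((↑) : ℝ → ℂ)) ≤ (r.toNNReal : ℝ≥0∞) := by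
    rw [spectralRadius]
    refine iSup₂_le fun z hz => ?_
    rw [ENNReal.coe_le_coe, ← norm_toNNReal]
    exact Real.toNNReal_mono (key z hz)
  refine lt_of_le_of_lt hrad ?_
  rw [← ENNReal.coe_one, ENNReal.coe_lt_coe, ← Real.toNNReal_one]
  exact (Real.toNNReal_lt_toNNReal_iff (by norm_num)).mpr hr1

private theorem powTendsto' (M : Matrix (Fin 2) (Fin 2) ℝ)
    (h : spectralRadius ℂ (M.map ((↑) : ℝ → ℂ)) < 1) :
    Tendsto (fun m : ℕ => M ^ m) atTop (𝓝 (0 : Matrix (Fin 2) (Fin 2) ℝ)) := by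
  letI : NormedRing (Matrix (Fin 2) (Fin 2) ℂ) := Matrix.linftyOpNormedRing
  letI : NormedAlgebra ℂ (Matrix (Fin 2) (Fin 2) ℂ) := Matrix.linftyOpNormedAlgebra
  haveI : CompleteSpace (Matrix (Fin 2) (Fin 2) ℂ) := FiniteDimensional.complete ℂ _
  set A := M.map ((↑) : ℝ → ℂ) with hA
  obtain ⟨c, hc1, hc2⟩ := exists_between h
  have hgel := spectrum.pow_nnnorm_pow_one_div_tendsto_nhds_spectralRadius A
  have hev : ∀ᶠ n : ℕ in atTop, (‖A ^ n‖₊ : ℝ≥0∞) ^ (1 / (n:ℝ)) < c :=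
    hgel.eventually_lt_const hc1
  have hcT : c ≠ ⊤ := ne_top_of_lt hc2
  set c' : ℝ≥0 := c.toNNReal with hc'
  have hcc : c = (c' : ℝ≥0∞) := (ENNReal.coe_toNNReal hcT).symm
  have hc'1 : (c' : ℝ) < 1 := by
    rw [hcc, ← ENNReal.coe_one, ENNReal.coe_lt_coe] at hc2
    exact_mod_cast hc2
  have entry_le : ∀ (B : Matrix (Fin 2) (Fin 2) ℂ) (i j : Fin 2), ‖B i j‖₊ ≤ ‖B‖₊ := by
    intro B i j
    rw [Matrix.linfty_opNNNorm_def]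
    exact le_trans
      (Finset.single_le_sum (f := fun j => ‖B i j‖₊) (fun _ _ => zero_le) (Finset.mem_univ j))
      (Finset.le_sup (f := fun i => ∑ j : Fin 2, ‖B i j‖₊) (Finset.mem_univ i))
  have hAn : ∀ n : ℕ, A ^ n = (M ^ n).map ((↑) : ℝ → ℂ) := by
    intro n
    have := map_pow ((algebraMap ℝ ℂ).mapMatrix) M n
    simpa [RingHom.mapMatrix_apply] using this.symm
  have hbound : ∀ᶠ n : ℕ in atTop, ∀ i j : Fin 2, |(M ^ n) i j| ≤ (c':ℝ)^n := by
    filter_upwards [hev, eventually_ge_atTop 1] with n hn hn1 i j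
    have hnn : ((n:ℝ)) ≠ 0 := by positivity
    have hx : (‖A ^ n‖₊ : ℝ≥0∞) ≤ c ^ n := by
      have h1 : (‖A ^ n‖₊ : ℝ≥0∞) = ((‖A ^ n‖₊ : ℝ≥0∞) ^ (1/(n:ℝ))) ^ (n:ℕ) := by
        rw [← ENNReal.rpow_natCast _ n, ← ENNReal.rpow_mul, one_div, inv_mul_cancel₀ hnn,
          ENNReal.rpow_one]
      rw [h1]
      exact pow_le_pow_left₀ zero_le hn.le n
    have hx' : ‖A ^ n‖₊ ≤ c' ^ n := by
      rw [hcc, ← ENNReal.coe_pow, ENNReal.coe_le_coe] at hx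
      exact hx
    have hentry : ‖(A ^ n) i j‖₊ ≤ c' ^ n := le_trans (entry_le _ i j) hx'
    have heq : (A ^ n) i j = (((M ^ n) i j : ℝ) : ℂ) := by rw [hAn n]; rfl
    rw [heq] at hentry
    have : ‖(((M ^ n) i j : ℝ) : ℂ)‖ ≤ ((c' ^ n : ℝ≥0) : ℝ) := hentry
    simpa [Complex.norm_real, Real.norm_eq_abs] using this
  refine tendsto_pi_nhds.mpr ?_
  intro i
  rw [tendsto_pi_nhds]
  intro j
  have h0 : (0 : Matrix (Fin 2) (Fin 2) ℝ) i j = 0 := rfl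
  rw [h0]
  refine squeeze_zero_norm' (a := fun n => (c':ℝ)^n) ?_ ?_
  · filter_upwards [hbound] with n hn
    simpa [Real.norm_eq_abs] using hn i j
  · exact tendsto_pow_atTop_nhds_zero_of_lt_one c'.coe_nonneg hc'1

/-- Stability of the propagation matrix of the split-step Langevin discretization:
with `α_s = e^{−Γs}` and
`M₁(Δt) = [[1 − aΔt²/2, α_{Δt/2}(Δt − aΔt³/4)], [−aΔt α_{Δt/2}, α_{Δt}(1 − aΔt²/2)]]`,
one has `M₁(Δt) = I − Δt B + O(Δt²)` (entrywise, as `Δt → 0`) with `B = [[0,−1],[a,Γ]]`;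
and for `Δt` sufficiently small the spectral radius of `M₁(Δt)` is strictly less than 1,
`M₁(Δt)^m → 0` as `m → ∞`, and `I − M₁(Δt)` is invertible. -/
theorem stmt14 (a Γ : ℝ) (ha : 0 < a) (hΓ : 0 < Γ) :
    (∀ i j : Fin 2,
      (fun Δt : ℝ =>
        (!![1 - a * Δt ^ 2 / 2, Real.exp (-Γ * (Δt / 2)) * (Δt - a * Δt ^ 3 / 4);
            -a * Δt * Real.exp (-Γ * (Δt / 2)), Real.exp (-Γ * Δt) * (1 - a * Δt ^ 2 / 2)]) i j
          - ((1 : Matrix (Fin 2) (Fin 2) ℝ) i j - Δt * (!![0, -1; a, Γ]) i j))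
      =O[𝓝 (0:ℝ)] fun Δt => Δt ^ 2)
    ∧
    (∃ δ > (0:ℝ), ∀ Δt : ℝ, 0 < Δt → Δt < δ →
      spectralRadius ℂ
        ((!![1 - a * Δt ^ 2 / 2, Real.exp (-Γ * (Δt / 2)) * (Δt - a * Δt ^ 3 / 4);
            -a * Δt * Real.exp (-Γ * (Δt / 2)), Real.exp (-Γ * Δt) * (1 - a * Δt ^ 2 / 2)]).map
          ((↑) : ℝ → ℂ)) < 1
      ∧ Tendsto (fun m : ℕ =>
          (!![1 - a * Δt ^ 2 / 2, Real.exp (-Γ * (Δt / 2)) * (Δt - a * Δt ^ 3 / 4);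
              -a * Δt * Real.exp (-Γ * (Δt / 2)), Real.exp (-Γ * Δt) * (1 - a * Δt ^ 2 / 2)]) ^ m)
          atTop (𝓝 (0 : Matrix (Fin 2) (Fin 2) ℝ))
      ∧ IsUnit ((1 : Matrix (Fin 2) (Fin 2) ℝ)
          - !![1 - a * Δt ^ 2 / 2, Real.exp (-Γ * (Δt / 2)) * (Δt - a * Δt ^ 3 / 4);
              -a * Δt * Real.exp (-Γ * (Δt / 2)), Real.exp (-Γ * Δt) * (1 - a * Δt ^ 2 / 2)])) := by

  constructor
  · intro i j
    fin_cases i <;> fin_cases j <;>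
      simp only [Fin.zero_eta, Fin.mk_one, Fin.isValue, Matrix.cons_val', Matrix.cons_val_zero,
        Matrix.cons_val_one, Matrix.head_cons, Matrix.head_fin_const, Matrix.empty_val',
        Matrix.cons_val_fin_one, Matrix.one_apply_eq, Matrix.one_apply_ne, ne_eq,
        Fin.one_eq_zero_iff, Fin.zero_eq_one_iff, Nat.succ_ne_self, not_false_eq_true,
        Matrix.of_apply]
    · -- (0,0)
      have := (isBigO_refl (fun x:ℝ => x^2) (𝓝 0)).const_mul_left (-(a/2))
      refine this.congr (fun x => ?_) (fun x => rfl); ring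
    · -- (0,1)
      have h1 : (fun Δt:ℝ => (Real.exp ((-Γ/2)*Δt) - 1) * Δt) =O[𝓝 (0:ℝ)] fun Δt => Δt^2 :=
        ((expO1' _).mul (isBigO_refl _ _)).congr_right (fun x => by ring)
      have h2 : (fun Δt:ℝ => Real.exp ((-Γ/2)*Δt) * (-(a/4) * Δt^3)) =O[𝓝 (0:ℝ)] fun Δt => Δt^2 := by
        simpa using (expO0' (-Γ/2)).mul ((powO' 2).const_mul_left (-(a/4)))
      refine (h1.add h2).congr (fun x => ?_) (fun x => rfl)
      rw [show (-Γ/2)*x = -Γ * (x/2) by ring]; ring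
    · -- (1,0)
      have h1 : (fun Δt:ℝ => (-a * (Real.exp ((-Γ/2)*Δt) - 1)) * Δt) =O[𝓝 (0:ℝ)] fun Δt => Δt^2 :=
        (((expO1' _).const_mul_left (-a)).mul (isBigO_refl _ _)).congr_right (fun x => by ring)
      refine h1.congr (fun x => ?_) (fun x => rfl)
      rw [show (-Γ/2)*x = -Γ * (x/2) by ring]; ring
    · -- (1,1)
      have h1 : (fun Δt:ℝ => Real.exp ((-Γ)*Δt) - 1 - (-Γ)*Δt) =O[𝓝 (0:ℝ)] fun Δt => Δt^2 := expO2' _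
      have h2 : (fun Δt:ℝ => Real.exp ((-Γ)*Δt) * (-(a/2) * Δt^2)) =O[𝓝 (0:ℝ)] fun Δt => Δt^2 := by
        simpa using (expO0' (-Γ)).mul (((isBigO_refl (fun x:ℝ => x^2) _)).const_mul_left (-(a/2)))
      refine (h1.add h2).congr (fun x => ?_) (fun x => rfl)
      ring
  · refine ⟨Real.sqrt (2/a), Real.sqrt_pos.mpr (by positivity), fun Δt hΔt hΔtδ => ?_⟩
    set M : Matrix (Fin 2) (Fin 2) ℝ :=
      !![1 - a * Δt ^ 2 / 2, Real.exp (-Γ * (Δt / 2)) * (Δt - a * Δt ^ 3 / 4);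
         -a * Δt * Real.exp (-Γ * (Δt / 2)), Real.exp (-Γ * Δt) * (1 - a * Δt ^ 2 / 2)] with hM
    set e : ℝ := Real.exp (-Γ * Δt) with he
    have he0 : 0 < e := Real.exp_pos _
    have he1 : e < 1 := by
      rw [he, Real.exp_lt_one_iff]
      nlinarith
    have hu : a * Δt ^ 2 / 2 < 1 := by
      have h2a : Δt ^ 2 < 2 / a := (Real.lt_sqrt hΔt.le).mp hΔtδ
      have := (lt_div_iff₀ ha).mp h2a
      nlinarith
    have hsq : Real.exp (-Γ * (Δt/2)) * Real.exp (-Γ * (Δt/2)) = e := by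
      rw [he, ← Real.exp_add]; ring_nf
    set t : ℝ := (1 - a * Δt ^ 2 / 2) * (1 + e) with ht
    have ht0 : 0 < t := by
      rw [ht]
      have : 0 < 1 - a * Δt ^ 2 / 2 := by linarith
      positivity
    have hu0 : 0 < a * Δt ^ 2 / 2 := by positivity
    have htlt : t < 1 + e := by rw [ht]; nlinarith
    have hM00 : M 0 0 = 1 - a * Δt ^ 2 / 2 := rfl
    have hM01 : M 0 1 = Real.exp (-Γ * (Δt / 2)) * (Δt - a * Δt ^ 3 / 4) := rfl
    have hM10 : M 1 0 = -a * Δt * Real.exp (-Γ * (Δt / 2)) := rfl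
    have hM11 : M 1 1 = e * (1 - a * Δt ^ 2 / 2) := rfl
    have htr : M 0 0 + M 1 1 = t := by
      rw [hM00, hM11, ht]; ring
    have hdet : M 0 0 * M 1 1 - M 0 1 * M 1 0 = e := by
      rw [hM00, hM01, hM10, hM11]
      linear_combination (Δt - a * Δt ^ 3 / 4) * (a * Δt) * hsq
    have hsr := specBound' t e he0 he1 ht0 htlt M htr hdet
    refine ⟨hsr, powTendsto' M hsr, ?_⟩
    rw [Matrix.isUnit_iff_isUnit_det, isUnit_iff_ne_zero, Matrix.det_fin_two]
    have e00 : ((1 : Matrix (Fin 2) (Fin 2) ℝ) - M) 0 0 = 1 - M 0 0 := by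
      simp [Matrix.sub_apply, Matrix.one_apply]
    have e01 : ((1 : Matrix (Fin 2) (Fin 2) ℝ) - M) 0 1 = -(M 0 1) := by
      simp [Matrix.sub_apply, Matrix.one_apply]
    have e10 : ((1 : Matrix (Fin 2) (Fin 2) ℝ) - M) 1 0 = -(M 1 0) := by
      simp [Matrix.sub_apply, Matrix.one_apply]
    have e11 : ((1 : Matrix (Fin 2) (Fin 2) ℝ) - M) 1 1 = 1 - M 1 1 := by
      simp [Matrix.sub_apply, Matrix.one_apply]
    rw [e00, e01, e10, e11, hM00, hM01, hM10, hM11]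
    have hval : (1 - (1 - a * Δt ^ 2 / 2)) * (1 - e * (1 - a * Δt ^ 2 / 2))
        - -(Real.exp (-Γ * (Δt / 2)) * (Δt - a * Δt ^ 3 / 4)) * -(-a * Δt * Real.exp (-Γ * (Δt / 2)))
        = (a * Δt ^ 2 / 2) * (1 + e) := by
      linear_combination (Δt - a * Δt ^ 3 / 4) * (a * Δt) * hsq
    rw [hval]
    positivity
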